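/- For an n-vertex connected graph G, ρ(A_κ̄(G)) ≤ 4α'(G)/n, where α'(G) is the matching number; equality holds only when G is a complete graph on an odd number of vertices. -/

import Mathlib

/-!
Fix a maximum matching `M`, let `U` be its vertex set (so `|U| = 2α'`), and note that the
unmatched vertices form an independent set. As `κ(v,w) ≤ min(deg v, deg w)`, the row of `v` in
the matrix `(κ(v,w))` sums to at most `(n-1) deg v ≤ |U| (n-1)` when `deg v ≤ |U|`. Otherwise
`v ∈ U` and `n ≥ |U| + 2`; for `w ∈ U` the vertices of `U \ {v,w}` together with the unmatched
neighbours of `w` meet every `v,w`-path other than the edge `vw`, and counting the edges between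
`U` and the unmatched vertices along the matching edges (the two ends of an edge of `M` cannot
have distinct unmatched neighbours, which would give an augmenting path of length three) gives
the row bound `|U| (n-1)` with `|U| - 1` to spare.

For an entrywise nonnegative matrix, every eigenvalue is bounded by the largest row sum, whence
`ρ ≤ |U| (n-1) / C(n,2) = 4α'/n`. At equality, the off-diagonal entries being positive, an
eigenvector of an extremal eigenvalue has constant modulus and all row sums are extremal. The
slack excludes `n ≥ |U| + 2`, and `|U| ≤ deg v ≤ n - 1` then forces `n = 2α' + 1` and `G`
complete.
-/

open Finset

namespace AvgConn

variable {V : Type*} [Fintype V] [DecidableEq V]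

/-- There exist `k` pairwise internally disjoint paths from `u` to `v` in `G`. -/
def InternallyDisjointPaths (G : SimpleGraph V) (u v : V) (k : ℕ) : Prop :=
  ∃ p : Fin k → G.Walk u v, Function.Injective p ∧ (∀ i, (p i).IsPath) ∧
    ∀ i j, i ≠ j → ∀ w, w ∈ (p i).support → w ∈ (p j).support → w = u ∨ w = v

/-- Local connectivity `κ(u,v)`: the maximum number of internally disjoint `u,v`-paths,
with the convention `κ(v,v) = 0`. -/
noncomputable def localConn (G : SimpleGraph V) (u v : V) : ℕ :=
  if u = v then 0 else sSup {k | InternallyDisjointPaths G u v k}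

/-- Vertex connectivity `κ(G)`: minimum number of vertices whose deletion leaves a
disconnected or trivial graph. -/
noncomputable def vertexConnectivity (G : SimpleGraph V) : ℕ :=
  sInf {k | ∃ S : Finset V, S.card = k ∧
    (¬ (G.induce ((Sᶜ : Finset V) : Set V)).Connected ∨ (Sᶜ : Finset V).card ≤ 1)}

/-- The average connectivity matrix: `(u,v)`-entry `κ(u,v) / C(n,2)`. -/
noncomputable def avgConnMatrix (G : SimpleGraph V) : Matrix V V ℝ :=
  Matrix.of fun u v => (localConn G u v : ℝ) / ((Fintype.card V).choose 2 : ℝ)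

/-- Transmission of a vertex: `T(v) = (1/C(n,2)) Σ_w κ(v,w)`. -/
noncomputable def transmission (G : SimpleGraph V) (v : V) : ℝ :=
  (∑ w, (localConn G v w : ℝ)) / ((Fintype.card V).choose 2 : ℝ)

/-- Average connectivity `κ̄(G)`: average of `κ(u,v)` over unordered pairs, equivalently the
sum over ordered pairs divided by `n(n-1)`. -/
noncomputable def avgConn (G : SimpleGraph V) : ℝ :=
  (∑ u, ∑ v, (localConn G u v : ℝ)) / ((Fintype.card V : ℝ) * ((Fintype.card V : ℝ) - 1))

/-- Matching number `α'(G)`: maximum number of edges in a matching. -/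
noncomputable def matchingNumber (G : SimpleGraph V) : ℕ :=
  sSup {k | ∃ M : G.Subgraph, M.IsMatching ∧ M.edgeSet.ncard = k}

/-- Spectral radius of a real square matrix: supremum of absolute values of its
(real) eigenvalues. -/
noncomputable def specRad {n : Type*} [Fintype n] [DecidableEq n] (A : Matrix n n ℝ) : ℝ :=
  sSup {r : ℝ | ∃ μ : ℝ, Module.End.HasEigenvalue (Matrix.toLin' A) μ ∧ r = |μ|}

/-- The join `G ∨ H` of two graphs: all edges of `G`, of `H`, and all edges between. -/
def graphJoin {α β : Type*} (G : SimpleGraph α) (H : SimpleGraph β) : SimpleGraph (α ⊕ β) where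
  Adj x y :=
    match x, y with
    | Sum.inl a, Sum.inl a' => G.Adj a a'
    | Sum.inr b, Sum.inr b' => H.Adj b b'
    | _, _ => True
  symm := ⟨by rintro (a | b) (a' | b') h <;> simp_all <;> exact h.symm⟩
  loopless := ⟨by rintro (a | b) h <;> simp_all⟩

end AvgConn

lemma Finset.card_add_card_le_of_forall_eq {α : Type*} {A B I : Finset α} (hA : A ⊆ I)
    (hB : B ⊆ I) (h : ∀ a ∈ A, ∀ b ∈ B, a = b) (hI : 2 ≤ #I) : #A + #B ≤ #I := by
  rcases A.eq_empty_or_nonempty with rfl | ⟨a, ha⟩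
  · simpa using card_le_card hB
  rcases B.eq_empty_or_nonempty with rfl | ⟨b, hb⟩
  · simpa using card_le_card hA
  have hA₁ : #A ≤ 1 := card_le_one.mpr fun a₁ h₁ a₂ h₂ => (h a₁ h₁ b hb).trans (h a₂ h₂ b hb).symm
  have hB₁ : #B ≤ 1 := card_le_one.mpr fun b₁ h₁ b₂ h₂ => (h a ha b₁ h₁).symm.trans (h a ha b₂ h₂)
  omega

namespace SimpleGraph

variable {V : Type*} {G : SimpleGraph V}

/-- `S` separates `u` from `v` in `G` minus the edge `uv`. -/
def Separates (G : SimpleGraph V) (S : Finset V) (u v : V) : Prop :=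
  ∀ p : G.Walk u v, p.IsPath → 2 ≤ p.length → ∃ i, 0 < i ∧ i < p.length ∧ p.getVert i ∈ S

lemma separates_neighborFinset_erase [DecidableEq V] (u v : V) [Fintype (G.neighborSet u)] :
    G.Separates ((G.neighborFinset u).erase v) u v := by
  intro p hp hlen
  refine ⟨1, one_pos, hlen, Finset.mem_erase.mpr ⟨?_, ?_⟩⟩
  · rw [Ne, hp.getVert_eq_end_iff (by omega)]
    omega
  · simpa using p.adj_getVert_succ (i := 0) (by omega)

end SimpleGraph

namespace SimpleGraph.Subgraph

variable {V : Type*} {G : SimpleGraph V} {M M' : G.Subgraph} {x y i j : V}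

lemma IsMatching.ncard_verts [Finite V] (hM : M.IsMatching) :
    M.verts.ncard = 2 * M.edgeSet.ncard := by
  classical
  have := Fintype.ofFinite V
  have hdeg : ∀ v, M.spanningCoe.degree v = if v ∈ M.verts then 1 else 0 := by
    intro v
    rw [degree_spanningCoe]
    split_ifs with hv
    · exact (isMatching_iff_forall_degree.mp hM) v hv
    · exact degree_of_notMem_verts hv
  rw [← edgeSet_spanningCoe, ← coe_edgeFinset, Set.ncard_coe_finset,
    ← sum_degrees_eq_twice_card_edges, Finset.sum_congr rfl fun v _ => hdeg v,
    Finset.sum_boole, Set.ncard_eq_toFinset_card', Nat.cast_id]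
  congr 1
  ext v
  simp

lemma IsMatching.deleteVerts_of_adj (hM : M.IsMatching) (hxy : M.Adj x y) :
    (M.deleteVerts {x, y}).IsMatching := by
  rintro v ⟨hv, hvxy⟩
  obtain ⟨w, hvw, huniq⟩ := hM hv
  have hw : w ∉ ({x, y} : Set V) := by
    rintro (rfl | rfl)
    · exact hvxy (.inr (hM.eq_of_adj_left hxy hvw.symm).symm)
    · exact hvxy (.inl (hM.eq_of_adj_left hxy.symm hvw.symm).symm)
  exact ⟨w, deleteVerts_adj.mpr ⟨hv, hvxy, hvw.snd_mem, hw, hvw⟩,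
    fun w' hw' => huniq w' (deleteVerts_adj.mp hw').2.2.2.2⟩

/-- Maximality is measured by matched vertices, twice the number of edges by
`IsMatching.ncard_verts`. -/
structure IsMaximumMatching (M : G.Subgraph) : Prop where
  isMatching : M.IsMatching
  ncard_verts_le : ∀ ⦃M' : G.Subgraph⦄, M'.IsMatching → M'.verts.ncard ≤ M.verts.ncard

namespace IsMaximumMatching

variable [Finite V] (hM : M.IsMaximumMatching)
include hM

lemma verts_ne_insert_insert (hM' : M'.IsMatching) (hi : i ∉ M.verts) (hj : j ∉ M.verts)
    (hij : i ≠ j) : M'.verts ≠ insert i (insert j M.verts) := by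
  intro h
  have := hM.ncard_verts_le hM'
  rw [h, Set.ncard_insert_of_notMem (by simp [hij, hi]), Set.ncard_insert_of_notMem hj] at this
  omega

lemma not_adj (hx : x ∉ M.verts) (hy : y ∉ M.verts) : ¬ G.Adj x y := by
  intro hxy
  have hd : Disjoint M.support (G.subgraphOfAdj hxy).support := by
    rw [hM.isMatching.support_eq_verts, (IsMatching.subgraphOfAdj hxy).support_eq_verts]
    simp [hx, hy]
  refine hM.verts_ne_insert_insert (hM.isMatching.sup (.subgraphOfAdj hxy) hd) hx hy hxy.ne ?_
  ext; simp

lemma isIndepSet_compl : G.IsIndepSet M.vertsᶜ := fun _ hx _ hy _ => hM.not_adj hx hy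

/-- Otherwise `i x y j` is an augmenting path: trading `xy` for `xi` and `yj` matches two more
vertices. -/
lemma eq_of_adj_of_adj (hxy : M.Adj x y) (hi : i ∉ M.verts) (hj : j ∉ M.verts)
    (hxi : G.Adj x i) (hyj : G.Adj y j) : i = j := by
  by_contra hij
  have hx := hxy.fst_mem
  have hy := hxy.snd_mem
  have hne := hxy.ne
  have hM₀ := hM.isMatching.deleteVerts_of_adj hxy
  have hd₁ : Disjoint (M.deleteVerts {x, y}).support (G.subgraphOfAdj hxi).support := by
    rw [hM₀.support_eq_verts, (IsMatching.subgraphOfAdj hxi).support_eq_verts]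
    simp [Set.disjoint_left]
    grind
  have hM₁ := hM₀.sup (.subgraphOfAdj hxi) hd₁
  have hd₂ : Disjoint (M.deleteVerts {x, y} ⊔ G.subgraphOfAdj hxi).support
      (G.subgraphOfAdj hyj).support := by
    rw [hM₁.support_eq_verts, (IsMatching.subgraphOfAdj hyj).support_eq_verts]
    simp [Set.disjoint_left]
    grind
  refine hM.verts_ne_insert_insert (hM₁.sup (.subgraphOfAdj hyj) hd₂) hi hj hij ?_
  ext; simp
  grind

end IsMaximumMatching

end SimpleGraph.Subgraph

namespace AvgConn

open SimpleGraph

section Matching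

variable {V : Type*} {G : SimpleGraph V}

lemma bddAbove_matchingNumber [Finite V] :
    BddAbove {k | ∃ M : G.Subgraph, M.IsMatching ∧ M.edgeSet.ncard = k} := by
  refine ⟨Nat.card V, ?_⟩
  rintro k ⟨M, hM, rfl⟩
  have := M.verts.ncard_le_card
  rw [hM.ncard_verts] at this
  omega

lemma le_matchingNumber [Finite V] {M : G.Subgraph} (hM : M.IsMatching) :
    M.edgeSet.ncard ≤ matchingNumber G := by
  rw [matchingNumber]
  exact le_csSup bddAbove_matchingNumber ⟨M, hM, rfl⟩

lemma exists_isMaximumMatching [Finite V] (G : SimpleGraph V) :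
    ∃ M : G.Subgraph, M.IsMaximumMatching ∧ M.verts.ncard = 2 * matchingNumber G := by
  obtain ⟨M, hM, hcard⟩ : ∃ M : G.Subgraph, M.IsMatching ∧ M.edgeSet.ncard = matchingNumber G :=
    Nat.sSup_mem (s := {k | ∃ M : G.Subgraph, M.IsMatching ∧ M.edgeSet.ncard = k})
      ⟨0, ⊥, fun _ h => h.elim, by simp⟩ bddAbove_matchingNumber
  refine ⟨M, ⟨hM, fun M' hM' => ?_⟩, by rw [hM.ncard_verts, hcard]⟩
  rw [hM'.ncard_verts, hM.ncard_verts, hcard]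
  exact Nat.mul_le_mul_left 2 (le_matchingNumber hM')

lemma one_le_matchingNumber [Fintype V] (hG : G.Connected) (hn : 2 ≤ Fintype.card V) :
    1 ≤ matchingNumber G := by
  have : Nontrivial V := Fintype.one_lt_card_iff_nontrivial.mp hn
  obtain ⟨v⟩ := hG.nonempty
  obtain ⟨w, hvw⟩ := hG.preconnected.exists_adj_of_nontrivial v
  simpa using le_matchingNumber (SimpleGraph.Subgraph.IsMatching.subgraphOfAdj hvw)

end Matching

section LocalConn

variable {V : Type*} {G : SimpleGraph V} {u v : V} {k : ℕ}

lemma internallyDisjointPaths_zero : InternallyDisjointPaths G u v 0 :=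
  ⟨finZeroElim, fun i => i.elim0, fun i => i.elim0, fun i => i.elim0⟩

lemma InternallyDisjointPaths.reverse (h : InternallyDisjointPaths G u v k) :
    InternallyDisjointPaths G v u k := by
  obtain ⟨p, hinj, hpath, hdisj⟩ := h
  refine ⟨fun i => (p i).reverse, fun i j hij => hinj (Walk.reverse_injective hij),
    fun i => (hpath i).reverse, fun i j hij w hwi hwj => ?_⟩
  rw [Walk.support_reverse, List.mem_reverse] at hwi hwj
  exact (hdisj i j hij w hwi hwj).symm

/-- The easy direction of Menger's theorem. -/
lemma InternallyDisjointPaths.le_card_add [DecidableRel G.Adj] {S : Finset V}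
    (h : InternallyDisjointPaths G u v k) (huv : u ≠ v) (hS : G.Separates S u v) :
    k ≤ #S + if G.Adj u v then 1 else 0 := by
  obtain ⟨p, hinj, hpath, hdisj⟩ := h
  choose! idx hidx using fun i => hS (p i) (hpath i)
  set T := univ.filter fun i => 2 ≤ (p i).length
  have hT : #T ≤ #S := by
    refine card_le_card_of_injOn (fun i => (p i).getVert (idx i))
      (fun i hi => (hidx i (mem_filter.mp hi).2).2.2) fun i hi j _ hij => ?_
    by_contra hne
    obtain ⟨hi0, hil, -⟩ := hidx i (mem_filter.mp hi).2
    have hj : (p i).getVert (idx i) ∈ (p j).support := by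
      rw [show (p i).getVert (idx i) = (p j).getVert (idx j) from hij]
      exact (p j).getVert_mem_support _
    rcases hdisj i j hne _ ((p i).getVert_mem_support _) hj with h | h
    · rw [(hpath i).getVert_eq_start_iff hil.le] at h
      omega
    · rw [(hpath i).getVert_eq_end_iff hil.le] at h
      omega
  have hlen : ∀ i ∈ Tᶜ, (p i).length = 1 := fun i hi => by
    have : (p i).length ≠ 0 := fun h => huv (Walk.eq_of_length_eq_zero h)
    simp only [T, mem_compl, mem_filter, mem_univ, true_and] at hi
    omega
  have hTc : #Tᶜ ≤ if G.Adj u v then 1 else 0 := by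
    split_ifs with hadj
    · exact card_le_one.mpr fun i hi j hj =>
        hinj (Walk.eq_of_length_le_one (hlen i hi).le (hlen j hj).le)
    · rw [card_eq_zero.mpr (eq_empty_of_forall_notMem fun i hi =>
        hadj (Walk.adj_of_length_eq_one (hlen i hi)))]
  calc k = #T + #Tᶜ := by rw [card_add_card_compl, Fintype.card_fin]
    _ ≤ _ := add_le_add hT hTc

variable [DecidableEq V]

lemma localConn_self (v : V) : localConn G v v = 0 := if_pos rfl

lemma localConn_comm (u v : V) : localConn G u v = localConn G v u := by
  by_cases huv : u = v
  · rw [huv]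
  rw [localConn, localConn, if_neg huv, if_neg (Ne.symm huv)]
  congr 1
  ext k
  exact ⟨.reverse, .reverse⟩

lemma localConn_le_card_add [DecidableRel G.Adj] {S : Finset V} (hS : G.Separates S u v) :
    localConn G u v ≤ #S + if G.Adj u v then 1 else 0 := by
  by_cases huv : u = v
  · simp [huv, localConn_self]
  rw [localConn, if_neg huv]
  exact csSup_le ⟨0, internallyDisjointPaths_zero⟩ fun k hk => hk.le_card_add huv hS

variable [Fintype V]

lemma InternallyDisjointPaths.le_degree [DecidableRel G.Adj]
    (h : InternallyDisjointPaths G u v k) (huv : u ≠ v) : k ≤ G.degree u := by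
  refine (h.le_card_add huv (G.separates_neighborFinset_erase u v)).trans ?_
  split_ifs with hadj
  · rw [card_erase_add_one (G.mem_neighborFinset u v |>.mpr hadj), card_neighborFinset_eq_degree]
  · exact card_erase_le

lemma localConn_le_degree [DecidableRel G.Adj] (u v : V) : localConn G u v ≤ G.degree u := by
  by_cases huv : u = v
  · simp [huv, localConn_self]
  rw [localConn, if_neg huv]
  exact csSup_le ⟨0, internallyDisjointPaths_zero⟩ fun k hk => hk.le_degree huv

lemma localConn_le_degree_right [DecidableRel G.Adj] (u v : V) :
    localConn G u v ≤ G.degree v :=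
  localConn_comm u v ▸ localConn_le_degree v u

lemma one_le_localConn (hG : G.Connected) (huv : u ≠ v) : 1 ≤ localConn G u v := by
  classical
  rw [localConn, if_neg huv]
  obtain ⟨p, hp⟩ := (hG.preconnected u v).some.toPath
  exact le_csSup ⟨G.degree u, fun k hk => hk.le_degree huv⟩
    ⟨fun _ => p, fun i j _ => Subsingleton.elim i j, fun _ => hp,
      fun i j hij => absurd (Subsingleton.elim i j) hij⟩

end LocalConn

section Spectral

open Matrix Module.End

variable {ι : Type*} [Fintype ι] {A : Matrix ι ι ℝ} {μ t : ℝ}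

lemma exists_abs_le_abs_of_ne_zero {x : ι → ℝ} (hx : x ≠ 0) :
    ∃ i, 0 < |x i| ∧ ∀ j, |x j| ≤ |x i| := by
  obtain ⟨j, hj⟩ := Function.ne_iff.mp hx
  have : Nonempty ι := ⟨j⟩
  obtain ⟨i, hi⟩ := Finite.exists_max (|x ·|)
  exact ⟨i, (abs_pos.mpr hj).trans_le (hi j), hi⟩

lemma abs_mul_abs_le_sum_mul_abs (hA : ∀ i j, 0 ≤ A i j) {x : ι → ℝ} (hx : A *ᵥ x = μ • x)
    (i : ι) : |μ| * |x i| ≤ ∑ j, A i j * |x j| :=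
  calc |μ| * |x i| = |∑ j, A i j * x j| := by
        rw [← abs_mul, ← smul_eq_mul, ← Pi.smul_apply, ← hx]
        rfl
    _ ≤ ∑ j, |A i j * x j| := abs_sum_le_sum_abs _ _
    _ = ∑ j, A i j * |x j| := by simp_rw [abs_mul, abs_of_nonneg (hA i _)]

variable [DecidableEq ι]

lemma exists_mulVec_eq_smul (hμ : HasEigenvalue (toLin' A) μ) :
    ∃ x ≠ 0, A *ᵥ x = μ • x := by
  obtain ⟨x, hx⟩ := hμ.exists_hasEigenvector
  exact ⟨x, hx.2, by simpa [toLin'_apply] using hx.apply_eq_smul⟩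

lemma abs_le_of_hasEigenvalue (hA : ∀ i j, 0 ≤ A i j) (hrow : ∀ i, ∑ j, A i j ≤ t)
    (hμ : HasEigenvalue (toLin' A) μ) : |μ| ≤ t := by
  obtain ⟨x, hx0, hx⟩ := exists_mulVec_eq_smul hμ
  obtain ⟨i, hpos, hmax⟩ := exists_abs_le_abs_of_ne_zero hx0
  refine le_of_mul_le_mul_right ?_ hpos
  calc |μ| * |x i| ≤ ∑ j, A i j * |x j| := abs_mul_abs_le_sum_mul_abs hA hx i
    _ ≤ ∑ j, A i j * |x i| := sum_le_sum fun j _ => mul_le_mul_of_nonneg_left (hmax j) (hA i j)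
    _ = (∑ j, A i j) * |x i| := (sum_mul ..).symm
    _ ≤ t * |x i| := mul_le_mul_of_nonneg_right (hrow i) hpos.le

/-- A maximum principle: an eigenvector for an eigenvalue of modulus `t` has constant modulus,
so every row sum attains the bound `t`. -/
lemma sum_eq_of_hasEigenvalue_of_abs_eq (hA : ∀ i j, 0 ≤ A i j) (hpos : ∀ i j, i ≠ j → 0 < A i j)
    (hrow : ∀ i, ∑ j, A i j ≤ t) (hμ : HasEigenvalue (toLin' A) μ) (habs : |μ| = t)
    (i : ι) : ∑ j, A i j = t := by
  obtain ⟨x, hx0, hx⟩ := exists_mulVec_eq_smul hμ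
  obtain ⟨i₀, hpos₀, hmax⟩ := exists_abs_le_abs_of_ne_zero hx0
  have hle : ∀ j ∈ univ, A i₀ j * |x j| ≤ A i₀ j * |x i₀| := fun j _ =>
    mul_le_mul_of_nonneg_left (hmax j) (hA i₀ j)
  have hsum : ∑ j, A i₀ j * |x j| = ∑ j, A i₀ j * |x i₀| := by
    refine le_antisymm (sum_le_sum hle) ?_
    calc ∑ j, A i₀ j * |x i₀| = (∑ j, A i₀ j) * |x i₀| := (sum_mul ..).symm
      _ ≤ |μ| * |x i₀| := habs ▸ mul_le_mul_of_nonneg_right (hrow i₀) hpos₀.le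
      _ ≤ ∑ j, A i₀ j * |x j| := abs_mul_abs_le_sum_mul_abs hA hx i₀
  have hflat : ∀ j, |x j| = |x i₀| := by
    intro j
    rcases eq_or_ne j i₀ with rfl | hj
    · rfl
    · exact mul_left_cancel₀ (hpos i₀ j hj.symm).ne'
        ((sum_eq_sum_iff_of_le hle).mp hsum j (mem_univ j))
  refine le_antisymm (hrow i) (le_of_mul_le_mul_right ?_ hpos₀)
  calc t * |x i₀| = |μ| * |x i| := by rw [habs, hflat i]
    _ ≤ ∑ j, A i j * |x j| := abs_mul_abs_le_sum_mul_abs hA hx i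
    _ = (∑ j, A i j) * |x i₀| := by simp_rw [hflat, sum_mul]

lemma specRad_le (ht : 0 ≤ t) (h : ∀ μ, HasEigenvalue (toLin' A) μ → |μ| ≤ t) :
    specRad A ≤ t :=
  Real.sSup_le (by rintro r ⟨μ, hμ, rfl⟩; exact h μ hμ) ht

lemma exists_hasEigenvalue_abs_eq_specRad (h : specRad A ≠ 0) :
    ∃ μ, HasEigenvalue (toLin' A) μ ∧ |μ| = specRad A := by
  set s := {r : ℝ | ∃ μ, HasEigenvalue (toLin' A) μ ∧ r = |μ|}
  have hfin : s.Finite := ((finite_hasEigenvalue _).image (|·|)).subset <| by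
    rintro r ⟨μ, hμ, rfl⟩
    exact ⟨μ, hμ, rfl⟩
  have hne : s.Nonempty := Set.nonempty_iff_ne_empty.mpr fun hs => h <| by
    change sSup s = 0
    rw [hs, Real.sSup_empty]
  obtain ⟨μ, hμ, hμs⟩ := hne.csSup_mem hfin
  exact ⟨μ, hμ, hμs.symm⟩

end Spectral

section RowSums

variable {V : Type*} [Fintype V] [DecidableEq V] {G : SimpleGraph V} [DecidableRel G.Adj]

lemma sum_localConn_le_mul_degree (v : V) :
    ∑ w, localConn G v w ≤ (Fintype.card V - 1) * G.degree v :=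
  calc ∑ w, localConn G v w = ∑ w ∈ univ.erase v, localConn G v w :=
        (sum_erase univ (localConn_self v)).symm
    _ ≤ #(univ.erase v) • G.degree v := sum_le_card_nsmul _ _ _ fun w _ => localConn_le_degree v w
    _ = (Fintype.card V - 1) * G.degree v := by
        rw [card_erase_of_mem (mem_univ v), card_univ, smul_eq_mul]

section IndependentComplement

variable {U : Finset V} (hU : G.IsIndepSet (↑U)ᶜ)
include hU

lemma sum_degree_compl_eq :
    ∑ i ∈ Uᶜ, G.degree i = ∑ u ∈ U, #{i ∈ Uᶜ | G.Adj u i} := by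
  calc ∑ i ∈ Uᶜ, G.degree i = ∑ i ∈ Uᶜ, #(U.bipartiteBelow G.Adj i) := by
        refine sum_congr rfl fun i hi => ?_
        rw [← card_neighborFinset_eq_degree, bipartiteBelow]
        congr 1
        ext u
        simp only [mem_filter, mem_neighborFinset]
        refine ⟨fun hiu => ⟨?_, hiu.symm⟩, fun h => h.2.symm⟩
        by_contra hu
        exact hU (by simpa using hi) (by simpa using hu) hiu.ne hiu
    _ = ∑ u ∈ U, #{i ∈ Uᶜ | G.Adj u i} :=
        (sum_card_bipartiteAbove_eq_sum_card_bipartiteBelow _).symm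

lemma separates_erase_erase_union (v w : V) :
    G.Separates ((U.erase v).erase w ∪ {i ∈ Uᶜ | G.Adj w i}) v w := by
  intro p hp hlen
  have hint : ∀ i, 0 < i → i < p.length → p.getVert i ≠ v ∧ p.getVert i ≠ w := fun i h0 hi =>
    ⟨by rw [Ne, hp.getVert_eq_start_iff hi.le]; omega,
      by rw [Ne, hp.getVert_eq_end_iff hi.le]; omega⟩
  have hmem : ∀ i, 0 < i → i < p.length → p.getVert i ∈ U →
      p.getVert i ∈ (U.erase v).erase w ∪ {i ∈ Uᶜ | G.Adj w i} := fun i h0 hi hU' =>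
    mem_union_left _ (mem_erase.mpr ⟨(hint i h0 hi).2, mem_erase.mpr ⟨(hint i h0 hi).1, hU'⟩⟩)
  by_cases h₁ : p.getVert 1 ∈ U
  · exact ⟨1, one_pos, hlen, hmem 1 one_pos hlen h₁⟩
  rcases hlen.eq_or_lt with h₂ | h₂
  · refine ⟨1, one_pos, hlen, mem_union_right _ (mem_filter.mpr ⟨mem_compl.mpr h₁, ?_⟩)⟩
    have := p.adj_getVert_succ (i := 1) (by omega)
    rw [show 1 + 1 = p.length by omega, p.getVert_length] at this
    exact this.symm
  by_cases h₂' : p.getVert 2 ∈ U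
  · exact ⟨2, two_pos, h₂, hmem 2 two_pos h₂ h₂'⟩
  have hadj := p.adj_getVert_succ (i := 1) (by omega)
  exact (hU (by simpa using h₁) (by simpa using h₂') hadj.ne hadj).elim

lemma localConn_le_of_mem {v w : V} (hv : v ∈ U) (hw : w ∈ U) (hvw : v ≠ w) :
    localConn G v w ≤ #U - 1 + #{i ∈ Uᶜ | G.Adj w i} := by
  have hcard : #((U.erase v).erase w) + 2 = #U := by
    rw [card_erase_of_mem (mem_erase.mpr ⟨hvw.symm, hw⟩), card_erase_of_mem hv]
    have := one_lt_card.mpr ⟨v, hv, w, hw, hvw⟩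
    omega
  calc localConn G v w
      ≤ #((U.erase v).erase w ∪ {i ∈ Uᶜ | G.Adj w i}) + if G.Adj v w then 1 else 0 :=
        localConn_le_card_add (separates_erase_erase_union hU v w)
    _ ≤ #((U.erase v).erase w) + #{i ∈ Uᶜ | G.Adj w i} + 1 :=
        add_le_add (card_union_le _ _) (by split_ifs <;> simp)
    _ = #U - 1 + #{i ∈ Uᶜ | G.Adj w i} := by omega

lemma sum_localConn_add_le_of_mem {v : V} (hv : v ∈ U)
    (he : 2 * ∑ u ∈ U, #{i ∈ Uᶜ | G.Adj u i} ≤ #U * #Uᶜ) :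
    ∑ w, localConn G v w + (#U - 1) ≤ #U * (Fintype.card V - 1) := by
  set e := ∑ u ∈ U, #{i ∈ Uᶜ | G.Adj u i}
  have hsumU : ∑ w ∈ U, localConn G v w ≤ (#U - 1) * (#U - 1) + e :=
    calc ∑ w ∈ U, localConn G v w = ∑ w ∈ U.erase v, localConn G v w :=
          (sum_erase U (localConn_self v)).symm
      _ ≤ ∑ w ∈ U.erase v, (#U - 1 + #{i ∈ Uᶜ | G.Adj w i}) := sum_le_sum fun w hw =>
          localConn_le_of_mem hU hv (mem_of_mem_erase hw) (ne_of_mem_erase hw).symm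
      _ ≤ (#U - 1) * (#U - 1) + e := by
          rw [sum_add_distrib, sum_const, card_erase_of_mem hv, smul_eq_mul]
          exact add_le_add_right (sum_le_sum_of_subset (erase_subset v U)) _
  have hsumUc : ∑ w ∈ Uᶜ, localConn G v w ≤ e :=
    (sum_le_sum fun w _ => localConn_le_degree_right v w).trans (sum_degree_compl_eq hU).le
  obtain ⟨b, hb⟩ : ∃ b, #U = b + 1 := ⟨#U - 1, by have := card_pos.mpr ⟨v, hv⟩; omega⟩
  have hn : Fintype.card V - 1 = b + #Uᶜ := by
    have := card_add_card_compl U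
    omega
  have hb' : #U - 1 = b := by omega
  rw [hb'] at hsumU
  rw [hb] at he
  rw [← sum_add_sum_compl U, hn, hb', hb]
  nlinarith

end IndependentComplement

section MaximumMatching

variable {M : G.Subgraph} (hM : M.IsMaximumMatching) [Fintype M.verts]
include hM

lemma two_mul_sum_card_filter_adj_le (hm : 2 ≤ #M.verts.toFinsetᶜ) :
    2 * ∑ u ∈ M.verts.toFinset, #{i ∈ M.verts.toFinsetᶜ | G.Adj u i} ≤
      #M.verts.toFinset * #M.verts.toFinsetᶜ := by
  set U := M.verts.toFinset
  choose! σ hσ using fun v (hv : v ∈ M.verts) => (hM.isMatching hv).exists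
  have hσU : ∀ u ∈ U, σ u ∈ U := fun u hu =>
    Set.mem_toFinset.mpr (hσ u (Set.mem_toFinset.mp hu)).snd_mem
  have hσσ : ∀ u ∈ U, σ (σ u) = u := fun u hu => by
    have h := hσ u (Set.mem_toFinset.mp hu)
    exact hM.isMatching.eq_of_adj_left (hσ _ h.snd_mem) h.symm
  have hswap : ∑ u ∈ U, #{i ∈ Uᶜ | G.Adj (σ u) i} = ∑ u ∈ U, #{i ∈ Uᶜ | G.Adj u i} :=
    sum_nbij' σ σ hσU hσU hσσ hσσ fun _ _ => rfl
  have hpair : ∀ u ∈ U, #{i ∈ Uᶜ | G.Adj u i} + #{i ∈ Uᶜ | G.Adj (σ u) i} ≤ #Uᶜ :=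
    fun u hu => card_add_card_le_of_forall_eq (filter_subset _ _) (filter_subset _ _)
      (fun i hi j hj => by
        rw [mem_filter, mem_compl, Set.mem_toFinset] at hi hj
        exact hM.eq_of_adj_of_adj (hσ u (Set.mem_toFinset.mp hu)) hi.1 hj.1 hi.2 hj.2) hm
  calc 2 * ∑ u ∈ U, #{i ∈ Uᶜ | G.Adj u i}
      = ∑ u ∈ U, (#{i ∈ Uᶜ | G.Adj u i} + #{i ∈ Uᶜ | G.Adj (σ u) i}) := by
        rw [sum_add_distrib, hswap, two_mul]
    _ ≤ ∑ _u ∈ U, #Uᶜ := sum_le_sum hpair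
    _ = #U * #Uᶜ := by rw [sum_const, smul_eq_mul]

lemma sum_localConn_add_le {v : V} (hv : v ∈ M.verts)
    (hn : #M.verts.toFinset + 2 ≤ Fintype.card V) :
    ∑ w, localConn G v w + (#M.verts.toFinset - 1) ≤
      #M.verts.toFinset * (Fintype.card V - 1) :=
  sum_localConn_add_le_of_mem (by simpa using hM.isIndepSet_compl) (Set.mem_toFinset.mpr hv) <|
    two_mul_sum_card_filter_adj_le hM <| by
      have := card_add_card_compl M.verts.toFinset
      omega

lemma sum_localConn_le (v : V) :
    ∑ w, localConn G v w ≤ #M.verts.toFinset * (Fintype.card V - 1) := by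
  by_cases hdeg : G.degree v ≤ #M.verts.toFinset
  · calc ∑ w, localConn G v w ≤ (Fintype.card V - 1) * G.degree v :=
          sum_localConn_le_mul_degree v
      _ ≤ #M.verts.toFinset * (Fintype.card V - 1) := by
          rw [mul_comm]
          exact Nat.mul_le_mul_right _ hdeg
  have hv : v ∈ M.verts := by
    by_contra hv
    refine hdeg (card_le_card fun w hw => Set.mem_toFinset.mpr ?_)
    by_contra hw'
    exact hM.not_adj hv hw' ((mem_neighborFinset _ _ _).mp hw)
  have := G.degree_lt_card_verts v
  have := sum_localConn_add_le hM hv (by omega)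
  omega

lemma eq_top_of_forall_sum_localConn_eq (ha : 2 ≤ #M.verts.toFinset)
    (h : ∀ v, ∑ w, localConn G v w = #M.verts.toFinset * (Fintype.card V - 1)) :
    G = ⊤ ∧ Fintype.card V = #M.verts.toFinset + 1 := by
  have hn := ha.trans (card_le_univ M.verts.toFinset)
  have hdeg : ∀ v, #M.verts.toFinset ≤ G.degree v := fun v => by
    have := h v ▸ sum_localConn_le_mul_degree v
    rw [mul_comm] at this
    exact Nat.le_of_mul_le_mul_left this (by omega)
  have hcard : Fintype.card V = #M.verts.toFinset + 1 := by
    obtain ⟨v, hv⟩ := card_pos.mp (by omega : 0 < #M.verts.toFinset)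
    have := G.degree_lt_card_verts v
    have := hdeg v
    by_contra hne
    have := sum_localConn_add_le hM (Set.mem_toFinset.mp hv) (by omega)
    rw [h v] at this
    omega
  refine ⟨?_, hcard⟩
  ext v w
  refine ⟨Adj.ne, fun hvw => ?_⟩
  have := hdeg v
  have := G.degree_lt_card_verts v
  exact (G.degree_eq_card_sub_one v).mp (by omega) hvw

end MaximumMatching

end RowSums

variable {V : Type*} [Fintype V] [DecidableEq V]

lemma cast_two_mul_mul_sub_one_div_choose_two {n : ℕ} (hn : 2 ≤ n) (a : ℕ) :
    ((2 * a * (n - 1) : ℕ) : ℝ) / (n.choose 2 : ℝ) = 4 * a / n := by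
  have h₁ : (n : ℝ) - 1 ≠ 0 := by
    rw [sub_ne_zero]
    exact_mod_cast (by omega : n ≠ 1)
  have h₀ : (n : ℝ) ≠ 0 := by exact_mod_cast (by omega : n ≠ 0)
  rw [Nat.cast_choose_two, Nat.cast_mul, Nat.cast_mul, Nat.cast_sub (by omega)]
  field_simp
  push_cast
  ring

lemma avgConnMatrix_nonneg (G : SimpleGraph V) (u v : V) : 0 ≤ avgConnMatrix G u v :=
  div_nonneg (Nat.cast_nonneg _) (Nat.cast_nonneg _)

lemma avgConnMatrix_pos {G : SimpleGraph V} (hG : G.Connected) (hn : 2 ≤ Fintype.card V)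
    {u v : V} (huv : u ≠ v) : 0 < avgConnMatrix G u v :=
  div_pos (by exact_mod_cast one_le_localConn hG huv) (by exact_mod_cast Nat.choose_pos hn)

lemma sum_avgConnMatrix (G : SimpleGraph V) (v : V) :
    ∑ w, avgConnMatrix G v w =
      ((∑ w, localConn G v w : ℕ) : ℝ) / ((Fintype.card V).choose 2 : ℝ) := by
  simp [avgConnMatrix, sum_div]

lemma sum_avgConnMatrix_le (G : SimpleGraph V) (v : V) :
    ∑ w, avgConnMatrix G v w ≤ 4 * (matchingNumber G : ℝ) / (Fintype.card V : ℝ) := by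
  classical
  rw [sum_avgConnMatrix]
  rcases lt_or_ge (Fintype.card V) 2 with hn | hn
  · rw [Nat.choose_eq_zero_of_lt hn, Nat.cast_zero, div_zero]
    positivity
  obtain ⟨M, hM, hcard⟩ := exists_isMaximumMatching G
  rw [Set.ncard_eq_toFinset_card'] at hcard
  rw [← cast_two_mul_mul_sub_one_div_choose_two hn]
  gcongr
  exact hcard ▸ sum_localConn_le hM v

lemma sum_localConn_eq_of_sum_avgConnMatrix_eq {G : SimpleGraph V} (hn : 2 ≤ Fintype.card V)
    {v : V} (h : ∑ w, avgConnMatrix G v w = 4 * (matchingNumber G : ℝ) / (Fintype.card V : ℝ)) :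
    ∑ w, localConn G v w = 2 * matchingNumber G * (Fintype.card V - 1) := by
  rw [sum_avgConnMatrix, ← cast_two_mul_mul_sub_one_div_choose_two hn,
    div_left_inj' (by exact_mod_cast (Nat.choose_pos hn).ne')] at h
  exact_mod_cast h

/-- For an `n`-vertex connected graph `G`, `ρ(A_κ̄(G)) ≤ 4α'(G)/n`; equality
holds only when `G` is a complete graph on an odd number of vertices. -/
theorem stmt9 (G : SimpleGraph V) (hG : G.Connected) :
    specRad (avgConnMatrix G) ≤ 4 * (matchingNumber G : ℝ) / (Fintype.card V : ℝ) ∧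
      (specRad (avgConnMatrix G) = 4 * (matchingNumber G : ℝ) / (Fintype.card V : ℝ) →
        G = ⊤ ∧ Odd (Fintype.card V)) := by
  classical
  have hrow := sum_avgConnMatrix_le G
  refine ⟨specRad_le (by positivity) fun μ hμ =>
    abs_le_of_hasEigenvalue (avgConnMatrix_nonneg G) hrow hμ, fun heq => ?_⟩
  rcases lt_or_ge (Fintype.card V) 2 with hn | hn
  · have hn₁ : Fintype.card V = 1 := le_antisymm (by omega) (Fintype.card_pos_iff.mpr hG.nonempty)
    have : Subsingleton V := Fintype.card_le_one_iff_subsingleton.mp hn₁.le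
    exact ⟨by ext u v; simp [Subsingleton.elim u v], hn₁ ▸ odd_one⟩
  have hα := one_le_matchingNumber hG hn
  obtain ⟨μ, hμ, habs⟩ := exists_hasEigenvalue_abs_eq_specRad (A := avgConnMatrix G)
    (by rw [heq]; positivity)
  have hsum := fun v => sum_localConn_eq_of_sum_avgConnMatrix_eq hn <|
    sum_eq_of_hasEigenvalue_of_abs_eq (avgConnMatrix_nonneg G)
      (fun _ _ => avgConnMatrix_pos hG hn) hrow hμ (habs.trans heq) v
  obtain ⟨M, hM, hcard⟩ := exists_isMaximumMatching G
  rw [Set.ncard_eq_toFinset_card'] at hcard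
  obtain ⟨htop, hn'⟩ := eq_top_of_forall_sum_localConn_eq hM (by omega) fun v => by
    rw [hsum v, hcard]
  exact ⟨htop, ⟨matchingNumber G, by omega⟩⟩

end AvgConn
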